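/- The arcsinh-system polynomials p_n(x) with EGF exp(x·sinh v) satisfy p_n(x) = Σ_{j=0}^{n} C(n,j) (−1)^j T_{n−j}(x/2) T_j(−x/2), where T_m are Touchard polynomials. -/

import Mathlib

/-! Since `x sinh v = (x/2)(e^v - 1) + (-x/2)(e^(-v) - 1)` and the formal exponential turns sums
of series without constant term into products, `exp (x sinh v)` is the product of
`exp (y (e^v - 1))` at `y = x/2` and the same series at `y = -x/2` with `v` replaced by `-v`.
The series `exp (y (e^v - 1))` is the exponential generating function `∑ T_m(y) v^m/m!` of the
Touchard polynomials, because `n! [v^n] (e^v - 1)^k = k! S(n,k)`: differentiating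
`(e^v - 1)^(k+1)` gives `(k+1) ((e^v - 1)^(k+1) + (e^v - 1)^k)`, which is the recurrence of `S`.
Comparing coefficients of `v^n` in the product gives the binomial convolution. -/

/-- Formal exponential `exp(f) = Σ_k f^k/k!` of a power series `f` with zero constant
term, over a `ℚ`-algebra. -/
noncomputable def expPS {A : Type*} [CommRing A] [Algebra ℚ A] (f : PowerSeries A) :
    PowerSeries A :=
  PowerSeries.mk fun n =>
    ∑ k ∈ Finset.range (n + 1), (k.factorial : ℚ)⁻¹ • PowerSeries.coeff (R := A) n (f ^ k)

/-- Stirling numbers of the second kind. -/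
def stirlingSecond : ℕ → ℕ → ℚ
  | 0, 0 => 1
  | 0, _ + 1 => 0
  | _ + 1, 0 => 0
  | n + 1, k + 1 => stirlingSecond n k + (k + 1) * stirlingSecond n (k + 1)

/-- The Touchard polynomial `T_m(y) = Σ_k S(m,k) y^k`. -/
noncomputable def touchard (m : ℕ) : Polynomial ℚ :=
  ∑ k ∈ Finset.range (m + 1), Polynomial.C (stirlingSecond m k) * Polynomial.X ^ k

/-- The formal power series `x sinh v = x Σ_{m odd} v^m/m!` over `ℚ[x]`. -/
noncomputable def xSinh : PowerSeries (Polynomial ℚ) :=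
  PowerSeries.C (R := Polynomial ℚ) Polynomial.X *
    PowerSeries.mk fun m => if Odd m then Polynomial.C ((m.factorial : ℚ)⁻¹) else 0

/-- The arcsinh-system polynomial `p_n(x) = n! [v^n] exp(x sinh v)`. -/
noncomputable def arcsinhP (n : ℕ) : Polynomial ℚ :=
  (n.factorial : ℚ) • PowerSeries.coeff (R := Polynomial ℚ) n (expPS xSinh)

open PowerSeries Finset
open scoped Nat

theorem sum_range_sum_antidiagonal_eq_sum_range_sum_range {M : Type*} [AddCommMonoid M]
    (n : ℕ) (c : ℕ → ℕ → M) (hc : ∀ k l, n < k + l → c k l = 0) :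
    ∑ m ∈ range (n + 1), ∑ p ∈ antidiagonal m, c p.1 p.2 =
      ∑ k ∈ range (n + 1), ∑ l ∈ range (n + 1), c k l := by
  simp_rw [Nat.sum_antidiagonal_eq_sum_range_succ c, sum_range_diag_flip]
  refine sum_congr rfl fun k hk => sum_subset (range_subset_range.mpr (by omega)) ?_
  intro l _ hl
  simp only [mem_range] at hk hl
  exact hc k l (by omega)

section Exp

@[simp]
theorem constantCoeff_rescale {R : Type*} [CommSemiring R] (a : R) (f : R⟦X⟧) :
    constantCoeff (rescale a f) = constantCoeff f := by
  rw [← coeff_zero_eq_constantCoeff_apply, coeff_rescale, pow_zero, one_mul,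
    coeff_zero_eq_constantCoeff_apply]

variable {A : Type*} [CommRing A] {f g : A⟦X⟧}

theorem coeff_pow_mul_pow_eq_zero (hf : constantCoeff f = 0) (hg : constantCoeff g = 0)
    {n k l : ℕ} (h : n < k + l) : coeff n (f ^ k * g ^ l) = 0 := by
  have hdvd : (X : A⟦X⟧) ^ (k + l) ∣ f ^ k * g ^ l := by
    rw [pow_add]
    exact mul_dvd_mul (pow_dvd_pow_of_dvd (X_dvd_iff.mpr hf) k)
      (pow_dvd_pow_of_dvd (X_dvd_iff.mpr hg) l)
  exact X_pow_dvd_iff.mp hdvd n h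

theorem coeff_pow_eq_zero_of_lt (hf : constantCoeff f = 0) {n k : ℕ} (h : n < k) :
    coeff n (f ^ k) = 0 := by
  simpa using coeff_pow_mul_pow_eq_zero hf hf (l := 0) h

variable [Algebra ℚ A]

theorem coeff_expPS_of_le (hf : constantCoeff f = 0) {n N : ℕ} (hn : n ≤ N) :
    coeff n (expPS f) = ∑ k ∈ range (N + 1), (k ! : ℚ)⁻¹ • coeff n (f ^ k) := by
  rw [expPS, coeff_mk]
  refine sum_subset (range_subset_range.mpr (by omega)) fun k _ hk => ?_
  rw [mem_range, not_lt] at hk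
  rw [coeff_pow_eq_zero_of_lt hf (by omega), smul_zero]

theorem expPS_add (hf : constantCoeff f = 0) (hg : constantCoeff g = 0) :
    expPS (f + g) = expPS f * expPS g := by
  ext n
  -- Both sides are `∑ f ^ k g ^ l / (k! l!)`, summed over a triangle on the left and a square
  -- on the right; the terms with `n < k + l` by which they differ do not reach `v ^ n`.
  set c : ℕ → ℕ → A := fun k l =>
    ((k ! : ℚ)⁻¹ * (l ! : ℚ)⁻¹) • coeff n (f ^ k * g ^ l)
  have h_add :
      coeff n (expPS (f + g)) = ∑ m ∈ range (n + 1), ∑ p ∈ antidiagonal m, c p.1 p.2 := by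
    rw [expPS, coeff_mk]
    refine sum_congr rfl fun m _ => ?_
    rw [(Commute.all f g).add_pow', map_sum, smul_sum]
    refine sum_congr rfl fun p hp => ?_
    rw [HasAntidiagonal.mem_antidiagonal] at hp
    subst hp
    rw [map_nsmul, ← Nat.cast_smul_eq_nsmul ℚ, smul_smul, Nat.cast_add_choose]
    congr 1
    field_simp
  have h_mul : coeff n (expPS f * expPS g) =
      ∑ k ∈ range (n + 1), ∑ l ∈ range (n + 1), c k l := by
    have h_term : ∀ p ∈ antidiagonal n, coeff p.1 (expPS f) * coeff p.2 (expPS g) =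
        ∑ k ∈ range (n + 1), ∑ l ∈ range (n + 1),
          ((k ! : ℚ)⁻¹ * (l ! : ℚ)⁻¹) • (coeff p.1 (f ^ k) * coeff p.2 (g ^ l)) := by
      intro p hp
      rw [HasAntidiagonal.mem_antidiagonal] at hp
      rw [coeff_expPS_of_le hf (N := n) (by omega), coeff_expPS_of_le hg (N := n) (by omega),
        sum_mul_sum]
      simp_rw [smul_mul_smul_comm]
    rw [coeff_mul, sum_congr rfl h_term, sum_comm]
    refine sum_congr rfl fun k _ => ?_
    rw [sum_comm]
    simp_rw [← smul_sum, ← coeff_mul, c]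
  rw [h_add, h_mul, sum_range_sum_antidiagonal_eq_sum_range_sum_range]
  intro k l h
  simp [c, coeff_pow_mul_pow_eq_zero hf hg h]

theorem expPS_rescale (a : A) (f : A⟦X⟧) : expPS (rescale a f) = rescale a (expPS f) := by
  ext n
  simp only [expPS, coeff_rescale, coeff_mk, ← map_pow, mul_sum, mul_smul_comm]

end Exp

theorem factorial_mul_coeff_exp_sub_one_pow (n k : ℕ) :
    (n ! : ℚ) * coeff n ((exp ℚ - 1) ^ k) = k ! * stirlingSecond n k := by
  induction n generalizing k with
  | zero =>
    rw [coeff_zero_eq_constantCoeff_apply, map_pow]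
    cases k <;> simp [stirlingSecond]
  | succ n ih =>
    cases k with
    | zero => simp [stirlingSecond, coeff_one]
    | succ k =>
      have h_deriv : d⁄dX ℚ ((exp ℚ - 1) ^ (k + 1)) =
          (k + 1 : ℚ) • ((exp ℚ - 1) ^ (k + 1) + (exp ℚ - 1) ^ k) := by
        rw [derivative_pow, map_sub, derivative_exp, derivative_one, sub_zero,
          Nat.add_sub_cancel]
        simp only [Algebra.smul_def, map_add, map_natCast, map_one, Nat.cast_add, Nat.cast_one]
        ring
      have h_coeff := congrArg (coeff n) h_deriv
      rw [coeff_derivative, LinearMap.map_smul, map_add] at h_coeff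
      calc ((n + 1 : ℕ) ! : ℚ) * coeff (n + 1) ((exp ℚ - 1) ^ (k + 1))
          = n ! * (coeff (n + 1) ((exp ℚ - 1) ^ (k + 1)) * (n + 1)) := by
            push_cast [Nat.factorial_succ]; ring
        _ = (k + 1) *
              (n ! * coeff n ((exp ℚ - 1) ^ (k + 1)) + n ! * coeff n ((exp ℚ - 1) ^ k)) := by
            rw [h_coeff, smul_eq_mul]; ring
        _ = ((k + 1) ! : ℚ) * stirlingSecond (n + 1) (k + 1) := by
            rw [ih, ih, stirlingSecond]; push_cast [Nat.factorial_succ]; ring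

section Touchard

variable {A : Type*} [CommRing A] [Algebra ℚ A]

theorem aeval_touchard (y : A) (n : ℕ) :
    Polynomial.aeval y (touchard n) = ∑ k ∈ range (n + 1), stirlingSecond n k • y ^ k := by
  simp [touchard, Algebra.smul_def]

theorem coeff_expPS_C_mul_exp_sub_one (y : A) (n : ℕ) :
    coeff n (expPS (C y * (exp A - 1))) = (n ! : ℚ)⁻¹ • Polynomial.aeval y (touchard n) := by
  have h_map : ∀ k, (exp A - 1) ^ k = map (algebraMap ℚ A) ((exp ℚ - 1) ^ k) := by
    simp
  rw [expPS, coeff_mk, aeval_touchard, smul_sum]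
  refine sum_congr rfl fun k _ => ?_
  have h_stirling :
      (k ! : ℚ)⁻¹ * coeff n ((exp ℚ - 1) ^ k) = (n ! : ℚ)⁻¹ * stirlingSecond n k := by
    field_simp
    linear_combination factorial_mul_coeff_exp_sub_one_pow n k
  rw [mul_pow, ← map_pow, coeff_C_mul, h_map, coeff_map, mul_comm, ← Algebra.smul_def,
    smul_smul, h_stirling, mul_smul]

end Touchard

theorem xSinh_eq_rescale_add :
    xSinh =
      rescale (-1)
          (C (-(Polynomial.C (2⁻¹ : ℚ) * Polynomial.X)) * (exp (Polynomial ℚ) - 1)) +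
        C (Polynomial.C (2⁻¹ : ℚ) * Polynomial.X) * (exp (Polynomial ℚ) - 1) := by
  refine PowerSeries.ext fun n => ?_
  simp only [xSinh, map_add, coeff_rescale, coeff_C_mul, coeff_mk, map_sub, coeff_exp, coeff_one]
  rcases n.even_or_odd with hn | hn
  · rw [if_neg (Nat.not_odd_iff_even.mpr hn), hn.neg_one_pow]
    ring
  · rw [if_pos hn, hn.neg_one_pow, if_neg (by rintro rfl; simp at hn)]
    simp only [one_div, Polynomial.algebraMap_eq]
    have h_half : Polynomial.C (2⁻¹ : ℚ) * 2 = 1 := by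
      rw [← map_ofNat Polynomial.C 2, ← map_mul]; norm_num
    linear_combination -(Polynomial.X * Polynomial.C ((n ! : ℚ)⁻¹)) * h_half

/-- `p_n(x) = Σ_{j=0}^n C(n,j) (-1)^j T_{n-j}(x/2) T_j(-x/2)`. -/
theorem arcsinhP_touchard (n : ℕ) :
    arcsinhP n = ∑ j ∈ Finset.range (n + 1),
      Polynomial.C ((n.choose j : ℚ) * (-1) ^ j) *
        (touchard (n - j)).comp (Polynomial.C ((2 : ℚ)⁻¹) * Polynomial.X) *
        (touchard j).comp (-(Polynomial.C ((2 : ℚ)⁻¹) * Polynomial.X)) := by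
  rw [arcsinhP, xSinh_eq_rescale_add, expPS_add (by simp) (by simp),
    expPS_rescale, coeff_mul, Nat.sum_antidiagonal_eq_sum_range_succ_mk, smul_sum]
  refine sum_congr rfl fun j hj => ?_
  have h_choose : (n.choose j : ℚ) = n ! * ((j ! : ℚ)⁻¹ * ((n - j)! : ℚ)⁻¹) := by
    rw [Nat.cast_choose ℚ (Nat.lt_succ_iff.mp (mem_range.mp hj))]
    field_simp
  rw [coeff_rescale, coeff_expPS_C_mul_exp_sub_one, coeff_expPS_C_mul_exp_sub_one,
    Polynomial.comp_eq_aeval, Polynomial.comp_eq_aeval, h_choose]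
  simp only [Polynomial.smul_eq_C_mul, map_mul, map_pow, map_neg, map_one]
  ring
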